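/- Let f = x^2 − y^3 and g = x^4 − z^5 in K[x,y,z]. The Newton polyhedron NP(fg) ⊂ ℝ^3 has exactly the four vertices (6,0,0), (0,3,5), (2,0,5), (4,3,0), and its facet normals are e_1, e_2, e_3, (3,2,0), (5,0,4), and (15,10,12); in particular the normal (15,10,12) of the compact facet is neither a facet normal of NP(f) nor of NP(g). -/

import Mathlib

/-!
Write `NP(p) = conv(E(p) + ℝ≥0³)` with `E(p)` the set of exponents of `p`. For a weight
`v ≥ 0`, the face of `NP(p)` on which `⟨v, ·⟩` is minimal is the convex hull of
`E_v + (ℝ≥0³ ∩ v^⊥)`, where `E_v` are the exponents of minimal weight. This face lies in a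
hyperplane, so it is two-dimensional exactly when it is not collinear.

For `fg`, `E = {(6,0,0), (0,3,5), (2,0,5), (4,3,0)}`. If `v` has one zero coordinate and is not
proportional to `(3,2,0)` or `(5,0,4)`, a single exponent has minimal weight and the face is a
ray; if `v` is positive and not proportional to `(15,10,12)`, at most two exponents have
minimal weight. For each of the six normals, three affinely independent points of the face are
exhibited. For `f` and `g`, `E` has only two points, so for the positive weight `(15,10,12)`
the face is a segment.
-/

open MvPolynomial

/-- The Newton polyhedron of `g`: the convex hull of `{C + v : λ_C ≠ 0, v ≥ 0}`. -/
noncomputable def NewtonPolyhedron {K : Type*} [CommSemiring K]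
    (g : MvPolynomial (Fin 3) K) : Set (Fin 3 → ℝ) :=
  convexHull ℝ {w | ∃ d ∈ g.support, ∃ v : Fin 3 → ℝ,
    (∀ i, 0 ≤ v i) ∧ w = (fun i => (d i : ℝ)) + v}

open Module Set Pointwise Matrix

section Affine

variable {k E : Type*} [DivisionRing k] [AddCommGroup E] [Module k E]

theorem collinear_add_of_subset_singleton {s t : Set E} {p : E} (hs : s ⊆ {p})
    (ht : Collinear k t) : Collinear k (s + t) := by
  rw [collinear_iff_exists_forall_eq_smul_vadd] at ht ⊢
  obtain ⟨p₀, w, hw⟩ := ht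
  refine ⟨p + p₀, w, ?_⟩
  rintro _ ⟨x, hx, y, hy, rfl⟩
  obtain ⟨r, rfl⟩ := hw y hy
  obtain rfl : x = p := hs hx
  exact ⟨r, by simp only [vadd_eq_add]; abel⟩

theorem collinear_of_subset_of_not_and {s : Set E} {p₁ p₂ p₃ p₄ : E}
    (hs : s ⊆ {p₁, p₂, p₃, p₄}) (h₁₂ : ¬(p₁ ∈ s ∧ p₂ ∈ s)) (h₃₄ : ¬(p₃ ∈ s ∧ p₄ ∈ s)) :
    Collinear k s := by
  classical
  refine (collinear_pair k (if p₁ ∈ s then p₁ else p₂) (if p₃ ∈ s then p₃ else p₄)).subset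
    fun x hx => ?_
  rcases hs hx with rfl | rfl | rfl | rfl <;> split_ifs <;> simp_all

end Affine

theorem not_collinear_of_det_ne_zero {ι : Type*} {s : Set (ι → ℝ)} {p q r : ι → ℝ}
    (hp : p ∈ s) (hq : q ∈ s) (hr : r ∈ s) (i j : ι)
    (h : (q i - p i) * (r j - p j) - (q j - p j) * (r i - p i) ≠ 0) : ¬Collinear ℝ s := by
  rw [collinear_iff_exists_forall_eq_smul_vadd]
  rintro ⟨p₀, w, hw⟩
  obtain ⟨a, rfl⟩ := hw p hp
  obtain ⟨b, rfl⟩ := hw q hq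
  obtain ⟨c, rfl⟩ := hw r hr
  apply h
  simp only [vadd_eq_add, Pi.add_apply, Pi.smul_apply, smul_eq_mul]
  ring

section MinFace

variable {𝕜 E : Type*} [Field 𝕜] [LinearOrder 𝕜] [AddCommGroup E] [Module 𝕜 E]
  (l : E →ₗ[𝕜] 𝕜)

def minFace (s : Set E) : Set E := {x ∈ s | ∀ y ∈ s, l x ≤ l y}

variable {l} {s t : Set E} {x y : E}

theorem minFace_subset : minFace l s ⊆ s := fun _ hx => hx.1

theorem map_eq_of_mem_minFace (hx : x ∈ minFace l s) (hy : y ∈ minFace l s) : l x = l y :=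
  le_antisymm (hx.2 y hy.1) (hy.2 x hx.1)

theorem minFace_eq_singleton (hx : x ∈ s) (h : ∀ y ∈ s, y ≠ x → l x < l y) :
    minFace l s = {x} := by
  ext y
  refine ⟨fun hy => by_contra fun hyx => (hy.2 x hx).not_gt (h y hy.1 hyx), ?_⟩
  rintro rfl
  refine ⟨hx, fun z hz => ?_⟩
  rcases eq_or_ne z y with rfl | hzy
  · exact le_rfl
  · exact (h z hz hzy).le

theorem vectorSpan_convexHull (s : Set E) : vectorSpan 𝕜 (convexHull 𝕜 s) = vectorSpan 𝕜 s := by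
  rw [← direction_affineSpan, affineSpan_convexHull, direction_affineSpan]

theorem finrank_vectorSpan_minFace_lt [FiniteDimensional 𝕜 E] (hl : l ≠ 0) :
    finrank 𝕜 (vectorSpan 𝕜 (minFace l s)) < finrank 𝕜 E := by
  have hle : vectorSpan 𝕜 (minFace l s) ≤ LinearMap.ker l := by
    rw [vectorSpan_def, Submodule.span_le]
    rintro _ ⟨x, hx, y, hy, rfl⟩
    simp [map_eq_of_mem_minFace hx hy]
  exact (Submodule.finrank_mono hle).trans_lt
    (Submodule.finrank_lt (LinearMap.ker_eq_top.not.2 hl))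

variable [IsStrictOrderedRing 𝕜]

theorem minFace_add : minFace l (s + t) = minFace l s + minFace l t := by
  ext z
  constructor
  · rintro ⟨⟨x, hx, y, hy, rfl⟩, hmin⟩
    refine ⟨x, ⟨hx, fun x' hx' => ?_⟩, y, ⟨hy, fun y' hy' => ?_⟩, rfl⟩
    · simpa using hmin (x' + y) (add_mem_add hx' hy)
    · simpa using hmin (x + y') (add_mem_add hx hy')
  · rintro ⟨x, hx, y, hy, rfl⟩
    refine ⟨add_mem_add hx.1 hy.1, ?_⟩
    rintro _ ⟨x', hx', y', hy', rfl⟩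
    simpa using add_le_add (hx.2 x' hx') (hy.2 y' hy')

theorem minFace_smul {c : 𝕜} (hc : 0 < c) : minFace (c • l) s = minFace l s := by
  ext x
  simp [minFace, mul_le_mul_iff_right₀ hc]

theorem isExtreme_minFace : IsExtreme 𝕜 s (minFace l s) := by
  refine ⟨minFace_subset, fun x₁ hx₁ x₂ hx₂ z hz ⟨a, b, ha, hb, hab, hxz⟩ => ⟨hx₁, fun y hy => ?_⟩⟩
  have hsum : a * l x₁ + b * l x₂ = l z := by simp [← hxz]
  have hz' : l z = a * l z + b * l z := by rw [← add_mul, hab, one_mul]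
  have h₂ := hz.2 x₂ hx₂
  have : l x₁ ≤ l z := by
    by_contra! hlt
    nlinarith [mul_le_mul_of_nonneg_left h₂ hb.le, mul_lt_mul_of_pos_left hlt ha]
  exact this.trans (hz.2 y hy)

theorem mem_extremePoints_of_minFace_eq_singleton (h : minFace l s = {x}) : x ∈ s.extremePoints 𝕜 :=
  isExtreme_singleton.1 (h ▸ isExtreme_minFace)

theorem Convex.union_halfSpace_gt {A : Set E} (hA : Convex 𝕜 A) {μ : 𝕜}
    (hAμ : ∀ y ∈ A, μ ≤ l y) : Convex 𝕜 (A ∪ {y | μ < l y}) := by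
  have mixed : ∀ x ∈ A, ∀ y, μ < l y → ∀ a b : 𝕜, 0 ≤ a → 0 ≤ b → a + b = 1 →
      a • x + b • y ∈ A ∪ {y | μ < l y} := by
    intro x hx y hy a b ha hb hab
    rcases hb.eq_or_lt with rfl | hb
    · left
      simpa [show a = 1 by simpa using hab] using hx
    · right
      have : μ = a * μ + b * μ := by rw [← add_mul, hab, one_mul]
      simp only [mem_ofPred_eq, map_add, map_smul, smul_eq_mul]
      nlinarith [mul_le_mul_of_nonneg_left (hAμ x hx) ha, mul_lt_mul_of_pos_left hy hb]
  rintro x (hx | hx) y (hy | hy) a b ha hb hab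
  · exact Or.inl (hA hx hy ha hb hab)
  · exact mixed x hx y hy a b ha hb hab
  · rw [add_comm]
    exact mixed y hy x hx b a hb ha (by rwa [add_comm])
  · exact Or.inr (convex_halfSpace_gt l.isLinear μ hx hy ha hb hab)

theorem minFace_convexHull : minFace l (convexHull 𝕜 s) = convexHull 𝕜 (minFace l s) := by
  ext x
  constructor
  · rintro ⟨hx, hmin⟩
    have hs : s ⊆ convexHull 𝕜 (minFace l s) ∪ {y | l x < l y} := fun y hy =>
      (hmin y (subset_convexHull 𝕜 s hy)).eq_or_lt.imp (fun (h : l x = l y) =>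
        subset_convexHull 𝕜 _ ⟨hy, fun z hz => h ▸ hmin z (subset_convexHull 𝕜 s hz)⟩) id
    have hlevel : ∀ y ∈ convexHull 𝕜 (minFace l s), l x ≤ l y :=
      convexHull_min (fun y hy => hmin y (subset_convexHull 𝕜 s hy.1))
        (convex_halfSpace_ge l.isLinear _)
    exact (convexHull_min hs ((convex_convexHull 𝕜 _).union_halfSpace_gt hlevel) hx).resolve_right
      (lt_irrefl _)
  · intro hx
    obtain ⟨x₀, hx₀⟩ := convexHull_nonempty_iff.1 ⟨x, hx⟩
    refine ⟨convexHull_mono minFace_subset hx, fun y hy => ?_⟩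
    have hle : l x ≤ l x₀ := convexHull_min
      (fun z hz => (map_eq_of_mem_minFace hz hx₀).le) (convex_halfSpace_le l.isLinear _) hx
    exact hle.trans (convexHull_min hx₀.2 (convex_halfSpace_ge l.isLinear _) hy)

theorem extremePoints_convexHull_add_subset {C : Set E}
    (hC : ∀ c ∈ C, ∀ t : 𝕜, 0 ≤ t → t • c ∈ C) :
    (convexHull 𝕜 (s + C)).extremePoints 𝕜 ⊆ s := by
  intro x hx
  obtain ⟨p, hp, c, hc, rfl⟩ := extremePoints_convexHull_subset hx
  have h₁ : p ∈ convexHull 𝕜 (s + C) :=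
    subset_convexHull 𝕜 _ ⟨p, hp, 0, by simpa using hC c hc 0 le_rfl, add_zero p⟩
  have h₂ : p + (2 : 𝕜) • c ∈ convexHull 𝕜 (s + C) :=
    subset_convexHull 𝕜 _ (add_mem_add hp (hC c hc 2 zero_le_two))
  have hmid : p + c ∈ openSegment 𝕜 p (p + (2 : 𝕜) • c) :=
    ⟨1 / 2, 1 / 2, by norm_num, by norm_num, by norm_num, by module⟩
  rw [← hx.2 h₁ h₂ hmid]
  exact hp

end MinFace

section Orthant

variable {ι : Type*} [Fintype ι] [DecidableEq ι] {v c : ι → ℝ}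

theorem mem_minFace_Ici_iff (hv : 0 ≤ v) :
    c ∈ minFace (dotProductEquiv ℝ ι v) (Ici 0) ↔ 0 ≤ c ∧ ∀ i, 0 < v i → c i = 0 := by
  simp only [minFace, mem_Ici, mem_ofPred_eq, dotProductEquiv_apply_apply]
  constructor
  · rintro ⟨hc, hmin⟩
    have hzero : v ⬝ᵥ c = 0 :=
      le_antisymm (by simpa using hmin 0 le_rfl) (dotProduct_nonneg_of_nonneg hv hc)
    rw [dotProduct, Finset.sum_eq_zero_iff_of_nonneg fun i _ => mul_nonneg (hv i) (hc i)] at hzero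
    exact ⟨hc, fun i hi => (mul_eq_zero.1 (hzero i (Finset.mem_univ i))).resolve_left hi.ne'⟩
  · rintro ⟨hc, hzero⟩
    refine ⟨hc, fun y hy => ?_⟩
    have : v ⬝ᵥ c = 0 := Finset.sum_eq_zero fun i _ => by
      rcases (hv i).eq_or_lt with h | h
      · rw [← h, Pi.zero_apply, zero_mul]
      · rw [hzero i h, mul_zero]
    exact this.trans_le (dotProduct_nonneg_of_nonneg hv hy)

theorem minFace_Ici_eq_zero (hv : ∀ i, 0 < v i) :
    minFace (dotProductEquiv ℝ ι v) (Ici 0) = {0} := by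
  ext c
  rw [mem_minFace_Ici_iff fun i => (hv i).le, mem_singleton_iff]
  exact ⟨fun ⟨_, h⟩ => funext fun i => h i (hv i), by rintro rfl; simp⟩

theorem collinear_minFace_Ici (hv : 0 ≤ v) (k : ι) (hk : ∀ i ≠ k, 0 < v i) :
    Collinear ℝ (minFace (dotProductEquiv ℝ ι v) (Ici 0)) := by
  rw [collinear_iff_exists_forall_eq_smul_vadd]
  refine ⟨0, Pi.single k 1, fun c hc => ⟨c k, funext fun i => ?_⟩⟩
  rw [mem_minFace_Ici_iff hv] at hc
  rcases eq_or_ne i k with rfl | hi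
  · simp
  · simp [hi, hc.2 i (hk i hi)]

end Orthant

local notation "ℓ" => dotProductEquiv ℝ (Fin 3)

section NewtonPolyhedron

def exponents {K σ : Type*} [CommSemiring K] (p : MvPolynomial σ K) : Set (σ → ℝ) :=
  (fun (d : σ →₀ ℕ) i => (d i : ℝ)) '' p.support

variable {K : Type*} [CommSemiring K]

theorem newtonPolyhedron_eq_convexHull (p : MvPolynomial (Fin 3) K) :
    NewtonPolyhedron p = convexHull ℝ (exponents p + Ici 0) := by
  unfold NewtonPolyhedron
  congr 1
  ext w
  constructor
  · rintro ⟨d, hd, q, hq, rfl⟩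
    exact ⟨_, ⟨d, hd, rfl⟩, q, hq, rfl⟩
  · rintro ⟨_, ⟨d, hd, rfl⟩, q, hq, rfl⟩
    exact ⟨d, hd, q, hq, rfl⟩

theorem minFace_newtonPolyhedron (p : MvPolynomial (Fin 3) K) (v : Fin 3 → ℝ) :
    minFace (ℓ v) (NewtonPolyhedron p) =
      convexHull ℝ (minFace (ℓ v) (exponents p) + minFace (ℓ v) (Ici 0)) := by
  rw [newtonPolyhedron_eq_convexHull, minFace_convexHull, minFace_add]

theorem finrank_vectorSpan_minFace_newtonPolyhedron_eq_two_iff (p : MvPolynomial (Fin 3) K)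
    {v : Fin 3 → ℝ} (hv : v ≠ 0) :
    finrank ℝ (vectorSpan ℝ (minFace (ℓ v) (NewtonPolyhedron p))) = 2 ↔
      ¬Collinear ℝ (minFace (ℓ v) (exponents p) + minFace (ℓ v) (Ici 0)) := by
  rw [minFace_newtonPolyhedron, vectorSpan_convexHull, collinear_iff_finrank_le_one,
    ← minFace_add]
  have := finrank_vectorSpan_minFace_lt (s := exponents p + Ici 0)
    ((dotProductEquiv ℝ (Fin 3)).map_ne_zero_iff.2 hv)
  rw [finrank_fin_fun] at this
  omega

theorem finrank_vectorSpan_minFace_newtonPolyhedron_ne_two {p : MvPolynomial (Fin 3) K}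
    (hp : Collinear ℝ (exponents p)) {v : Fin 3 → ℝ} (hv : ∀ i, 0 < v i) :
    finrank ℝ (vectorSpan ℝ (minFace (ℓ v) (NewtonPolyhedron p))) ≠ 2 := by
  rw [Ne, finrank_vectorSpan_minFace_newtonPolyhedron_eq_two_iff p fun h => by simpa [h] using hv 0,
    not_not, minFace_Ici_eq_zero hv, singleton_zero, add_zero]
  exact hp.subset minFace_subset

theorem extremePoints_newtonPolyhedron_subset (p : MvPolynomial (Fin 3) K) :
    (NewtonPolyhedron p).extremePoints ℝ ⊆ exponents p := by
  rw [newtonPolyhedron_eq_convexHull]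
  exact extremePoints_convexHull_add_subset fun c hc t ht => mem_Ici.2 (smul_nonneg ht hc)

theorem mem_extremePoints_newtonPolyhedron {p : MvPolynomial (Fin 3) K} {v x : Fin 3 → ℝ}
    (hv : ∀ i, 0 < v i) (hx : x ∈ exponents p) (h : ∀ y ∈ exponents p, y ≠ x → ℓ v x < ℓ v y) :
    x ∈ (NewtonPolyhedron p).extremePoints ℝ := by
  rw [newtonPolyhedron_eq_convexHull]
  refine mem_extremePoints_of_minFace_eq_singleton (l := ℓ v) ?_
  rw [minFace_convexHull, minFace_add, minFace_eq_singleton hx h, minFace_Ici_eq_zero hv,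
    singleton_zero, add_zero, convexHull_singleton]

end NewtonPolyhedron

theorem collinear_exponents_X_pow_sub_X_pow {K σ : Type*} [CommRing K] [Nontrivial K]
    (i j : σ) (m n : ℕ) : Collinear ℝ (exponents (X i ^ m - X j ^ n : MvPolynomial σ K)) := by
  classical
  refine (collinear_pair ℝ (fun k => (Finsupp.single i m k : ℝ))
    (fun k => (Finsupp.single j n k : ℝ))).subset ?_
  rintro _ ⟨d, hd, rfl⟩
  have := support_sub σ _ _ hd
  simp only [support_X_pow, Finset.mem_union, Finset.mem_singleton] at this
  rcases this with rfl | rfl <;> simp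

def fgExponents : Set (Fin 3 → ℝ) := {![6, 0, 0], ![0, 3, 5], ![2, 0, 5], ![4, 3, 0]}

theorem exponents_fg {K : Type*} [CommRing K] [Nontrivial K] :
    exponents ((X 0 ^ 2 - X 1 ^ 3) * (X 0 ^ 4 - X 2 ^ 5) : MvPolynomial (Fin 3) K) =
      fgExponents := by
  classical
  apply Subset.antisymm
  · rintro _ ⟨d, hd, rfl⟩
    obtain ⟨x, hx, y, hy, rfl⟩ := Finset.mem_add.1 (support_mul _ _ hd)
    replace hx := support_sub (Fin 3) _ _ hx
    replace hy := support_sub (Fin 3) _ _ hy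
    simp only [support_X_pow, Finset.mem_union, Finset.mem_singleton] at hx hy
    rcases hx with rfl | rfl <;> rcases hy with rfl | rfl <;>
      simp [fgExponents, funext_iff, Fin.forall_fin_succ, Finsupp.single_apply, -Nat.cast_add]
  · rintro _ (rfl | rfl | rfl | rfl) <;>
      [refine ⟨Finsupp.single 0 6, ?_, ?_⟩;
       refine ⟨Finsupp.single 1 3 + Finsupp.single 2 5, ?_, ?_⟩;
       refine ⟨Finsupp.single 0 2 + Finsupp.single 2 5, ?_, ?_⟩;
       refine ⟨Finsupp.single 0 4 + Finsupp.single 1 3, ?_, ?_⟩] <;>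
    simp only [Finset.mem_coe, MvPolynomial.mem_support_iff, mul_sub, sub_mul, X_pow_eq_monomial,
      monomial_mul, coeff_sub, coeff_monomial] <;>
    simp [DFunLike.ext_iff, _root_.funext_iff, Fin.forall_fin_succ, Finsupp.single_apply]

section Weights

variable {a b c : ℝ}

theorem collinear_fg_of_fst_eq_zero (hb : 0 < b) (hc : 0 < c) :
    Collinear ℝ (minFace (ℓ ![0, b, c]) fgExponents + minFace (ℓ ![0, b, c]) (Ici 0)) := by
  refine collinear_add_of_subset_singleton (minFace_eq_singleton (x := ![6, 0, 0])
    (by simp [fgExponents]) (by simp [fgExponents]; and_intros <;> linarith)).subset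
    (collinear_minFace_Ici ?_ 0 ?_)
  · simp [Pi.le_def, Fin.forall_fin_succ, hb.le, hc.le]
  · intro i hi; fin_cases i <;> simp_all

theorem collinear_fg_of_snd_eq_zero (ha : 0 < a) (hc : 0 < c) (h : 4 * a ≠ 5 * c) :
    Collinear ℝ (minFace (ℓ ![a, 0, c]) fgExponents + minFace (ℓ ![a, 0, c]) (Ici 0)) := by
  have hray : Collinear ℝ (minFace (ℓ ![a, 0, c]) (Ici 0)) := by
    refine collinear_minFace_Ici ?_ 1 ?_
    · simp [Pi.le_def, Fin.forall_fin_succ, ha.le, hc.le]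
    · intro i hi; fin_cases i <;> simp_all
  rcases h.lt_or_gt with h | h
  · exact collinear_add_of_subset_singleton (minFace_eq_singleton (x := ![4, 3, 0])
      (by simp [fgExponents]) (by simp [fgExponents]; and_intros <;> linarith)).subset hray
  · exact collinear_add_of_subset_singleton (minFace_eq_singleton (x := ![0, 3, 5])
      (by simp [fgExponents]) (by simp [fgExponents]; and_intros <;> linarith)).subset hray

theorem collinear_fg_of_thd_eq_zero (ha : 0 < a) (hb : 0 < b) (h : 2 * a ≠ 3 * b) :
    Collinear ℝ (minFace (ℓ ![a, b, 0]) fgExponents + minFace (ℓ ![a, b, 0]) (Ici 0)) := by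
  have hray : Collinear ℝ (minFace (ℓ ![a, b, 0]) (Ici 0)) := by
    refine collinear_minFace_Ici ?_ 2 ?_
    · simp [Pi.le_def, Fin.forall_fin_succ, ha.le, hb.le]
    · intro i hi; fin_cases i <;> simp_all
  rcases h.lt_or_gt with h | h
  · exact collinear_add_of_subset_singleton (minFace_eq_singleton (x := ![2, 0, 5])
      (by simp [fgExponents]) (by simp [fgExponents]; and_intros <;> linarith)).subset hray
  · exact collinear_add_of_subset_singleton (minFace_eq_singleton (x := ![0, 3, 5])
      (by simp [fgExponents]) (by simp [fgExponents]; and_intros <;> linarith)).subset hray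

theorem collinear_fg_of_pos (ha : 0 < a) (hb : 0 < b) (hc : 0 < c)
    (h : 2 * a ≠ 3 * b ∨ 4 * a ≠ 5 * c) :
    Collinear ℝ (minFace (ℓ ![a, b, c]) fgExponents + minFace (ℓ ![a, b, c]) (Ici 0)) := by
  rw [minFace_Ici_eq_zero (by simp [Fin.forall_fin_succ, ha, hb, hc]), singleton_zero, add_zero]
  -- Relative to `(6,0,0)`, the weights of `(4,3,0)`, `(2,0,5)`, `(0,3,5)` are `3b - 2a`,
  -- `5c - 4a` and their sum: so if `3b ≠ 2a`, each of the pairs `{(6,0,0), (4,3,0)}` and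
  -- `{(2,0,5), (0,3,5)}` contains at most one exponent of minimal weight.
  have hne : ∀ {x y}, ℓ ![a, b, c] x ≠ ℓ ![a, b, c] y →
      ¬(x ∈ minFace (ℓ ![a, b, c]) fgExponents ∧ y ∈ minFace (ℓ ![a, b, c]) fgExponents) :=
    fun hxy ⟨hx, hy⟩ => hxy (map_eq_of_mem_minFace hx hy)
  rcases h with h | h <;>
  [refine collinear_of_subset_of_not_and (p₁ := ![6, 0, 0]) (p₂ := ![4, 3, 0])
      (p₃ := ![2, 0, 5]) (p₄ := ![0, 3, 5]) (minFace_subset.trans ?_) (hne ?_) (hne ?_);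
    refine collinear_of_subset_of_not_and (p₁ := ![6, 0, 0]) (p₂ := ![2, 0, 5])
      (p₃ := ![4, 3, 0]) (p₄ := ![0, 3, 5]) (minFace_subset.trans ?_) (hne ?_) (hne ?_)] <;>
  simp [fgExponents, insert_subset_iff] <;>
  contrapose! h <;>
  linarith

theorem not_collinear_fg_of_normal {v : Fin 3 → ℝ} (hv : ∃ t : ℝ, 0 < t ∧
      (v = t • ![1, 0, 0] ∨ v = t • ![0, 1, 0] ∨ v = t • ![0, 0, 1] ∨ v = t • ![3, 2, 0] ∨
        v = t • ![5, 0, 4] ∨ v = t • ![15, 10, 12])) :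
    ¬Collinear ℝ (minFace (ℓ v) fgExponents + minFace (ℓ v) (Ici 0)) := by
  obtain ⟨t, ht, hn⟩ := hv
  have hscale : ∀ n, v = t • n → minFace (ℓ v) fgExponents + minFace (ℓ v) (Ici 0) =
      minFace (ℓ n) fgExponents + minFace (ℓ n) (Ici 0) := by
    rintro n rfl
    rw [map_smul, minFace_smul ht, minFace_smul ht]
  have hmem : ∀ {n x u : Fin 3 → ℝ}, 0 ≤ n → x ∈ fgExponents → (∀ y ∈ fgExponents, ℓ n x ≤ ℓ n y) →
      0 ≤ u → (∀ i, 0 < n i → u i = 0) →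
      x + u ∈ minFace (ℓ n) fgExponents + minFace (ℓ n) (Ici 0) :=
    fun hn hx hxmin hu hun => add_mem_add ⟨hx, hxmin⟩ ((mem_minFace_Ici_iff hn).2 ⟨hu, hun⟩)
  rcases hn with h | h | h | h | h | h <;> rw [hscale _ h] <;>
  [refine not_collinear_of_det_ne_zero (p := ![0, 3, 5] + 0) (q := ![0, 3, 5] + ![0, 1, 0])
      (r := ![0, 3, 5] + ![0, 0, 1]) (hmem ?_ ?_ ?_ ?_ ?_) (hmem ?_ ?_ ?_ ?_ ?_)
      (hmem ?_ ?_ ?_ ?_ ?_) 1 2 ?_;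
    refine not_collinear_of_det_ne_zero (p := ![6, 0, 0] + 0) (q := ![6, 0, 0] + ![1, 0, 0])
      (r := ![6, 0, 0] + ![0, 0, 1]) (hmem ?_ ?_ ?_ ?_ ?_) (hmem ?_ ?_ ?_ ?_ ?_)
      (hmem ?_ ?_ ?_ ?_ ?_) 0 2 ?_;
    refine not_collinear_of_det_ne_zero (p := ![6, 0, 0] + 0) (q := ![6, 0, 0] + ![1, 0, 0])
      (r := ![6, 0, 0] + ![0, 1, 0]) (hmem ?_ ?_ ?_ ?_ ?_) (hmem ?_ ?_ ?_ ?_ ?_)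
      (hmem ?_ ?_ ?_ ?_ ?_) 0 1 ?_;
    refine not_collinear_of_det_ne_zero (p := ![2, 0, 5] + 0) (q := ![0, 3, 5] + 0)
      (r := ![2, 0, 5] + ![0, 0, 1]) (hmem ?_ ?_ ?_ ?_ ?_) (hmem ?_ ?_ ?_ ?_ ?_)
      (hmem ?_ ?_ ?_ ?_ ?_) 0 2 ?_;
    refine not_collinear_of_det_ne_zero (p := ![4, 3, 0] + 0) (q := ![0, 3, 5] + 0)
      (r := ![4, 3, 0] + ![0, 1, 0]) (hmem ?_ ?_ ?_ ?_ ?_) (hmem ?_ ?_ ?_ ?_ ?_)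
      (hmem ?_ ?_ ?_ ?_ ?_) 0 1 ?_;
    refine not_collinear_of_det_ne_zero (p := ![6, 0, 0] + 0) (q := ![4, 3, 0] + 0)
      (r := ![2, 0, 5] + 0) (hmem ?_ ?_ ?_ ?_ ?_) (hmem ?_ ?_ ?_ ?_ ?_)
      (hmem ?_ ?_ ?_ ?_ ?_) 0 1 ?_] <;>
  norm_num [fgExponents, Pi.le_def, Fin.forall_fin_succ, Matrix.cons_val_two]

theorem normal_of_not_collinear_fg (ha : 0 ≤ a) (hb : 0 ≤ b) (hc : 0 ≤ c) (h0 : ![a, b, c] ≠ 0)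
    (hnc : ¬Collinear ℝ (minFace (ℓ ![a, b, c]) fgExponents + minFace (ℓ ![a, b, c]) (Ici 0))) :
    ∃ t : ℝ, 0 < t ∧ (![a, b, c] = t • ![1, 0, 0] ∨ ![a, b, c] = t • ![0, 1, 0] ∨
      ![a, b, c] = t • ![0, 0, 1] ∨ ![a, b, c] = t • ![3, 2, 0] ∨
      ![a, b, c] = t • ![5, 0, 4] ∨ ![a, b, c] = t • ![15, 10, 12]) := by
  rcases ha.eq_or_lt with rfl | ha <;> rcases hb.eq_or_lt with rfl | hb <;>
    rcases hc.eq_or_lt with rfl | hc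
  · simp at h0
  · exact ⟨c, hc, by simp⟩
  · exact ⟨b, hb, by simp⟩
  · exact absurd (collinear_fg_of_fst_eq_zero hb hc) hnc
  · exact ⟨a, ha, by simp⟩
  · by_cases h : 4 * a = 5 * c
    · refine ⟨a / 5, by positivity, Or.inr <| Or.inr <| Or.inr <| Or.inr <| Or.inl ?_⟩
      simp
      linarith
    · exact absurd (collinear_fg_of_snd_eq_zero ha hc h) hnc
  · by_cases h : 2 * a = 3 * b
    · refine ⟨a / 3, by positivity, Or.inr <| Or.inr <| Or.inr <| Or.inl ?_⟩
      simp
      linarith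
    · exact absurd (collinear_fg_of_thd_eq_zero ha hb h) hnc
  · by_cases h : 2 * a = 3 * b ∧ 4 * a = 5 * c
    · refine ⟨a / 15, by positivity, Or.inr <| Or.inr <| Or.inr <| Or.inr <| Or.inr ?_⟩
      simp
      constructor <;> linarith
    · exact absurd (collinear_fg_of_pos ha hb hc (not_and_or.1 h)) hnc

end Weights

theorem extremePoints_newtonPolyhedron_fg {K : Type*} [CommRing K] [Nontrivial K] :
    (NewtonPolyhedron ((X 0 ^ 2 - X 1 ^ 3) * (X 0 ^ 4 - X 2 ^ 5) :
      MvPolynomial (Fin 3) K)).extremePoints ℝ = fgExponents := by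
  refine ((extremePoints_newtonPolyhedron_subset _).trans exponents_fg.subset).antisymm ?_
  rintro _ (rfl | rfl | rfl | rfl) <;>
  [apply mem_extremePoints_newtonPolyhedron (v := ![1, 10, 10]);
   apply mem_extremePoints_newtonPolyhedron (v := ![10, 1, 1]);
   apply mem_extremePoints_newtonPolyhedron (v := ![2, 2, 1]);
   apply mem_extremePoints_newtonPolyhedron (v := ![3, 1, 12])] <;>
  norm_num [exponents_fg, fgExponents, Fin.forall_fin_succ]

/-- For `f = x² - y³`, `g = x⁴ - z⁵` in `K[x,y,z]`: `NP(fg)` has exactly the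
four vertices `(6,0,0), (0,3,5), (2,0,5), (4,3,0)`; its facet normals are, up
to positive scaling, `e₁, e₂, e₃, (3,2,0), (5,0,4), (15,10,12)`; and
`(15,10,12)` (the normal of the compact facet) is a facet normal of neither
`NP(f)` nor `NP(g)`. -/
theorem stmt17 {K : Type*} [Field K]
    (f g : MvPolynomial (Fin 3) K)
    (hf : f = X 0 ^ 2 - X 1 ^ 3) (hg : g = X 0 ^ 4 - X 2 ^ 5)
    (face : MvPolynomial (Fin 3) K → (Fin 3 → ℝ) → Set (Fin 3 → ℝ))
    (hface : ∀ h v, face h v = {w ∈ NewtonPolyhedron h |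
        ∀ u ∈ NewtonPolyhedron h, ∑ k, v k * w k ≤ ∑ k, v k * u k}) :
    Set.extremePoints ℝ (NewtonPolyhedron (f * g)) =
      {![(6:ℝ), 0, 0], ![0, 3, 5], ![2, 0, 5], ![4, 3, 0]} ∧
    (∀ v : Fin 3 → ℝ, (∀ i, 0 ≤ v i) → v ≠ 0 →
      (Module.finrank ℝ (vectorSpan ℝ (face (f * g) v)) = 2 ↔
        ∃ c : ℝ, 0 < c ∧ (v = c • ![1, 0, 0] ∨ v = c • ![0, 1, 0] ∨
          v = c • ![0, 0, 1] ∨ v = c • ![3, 2, 0] ∨ v = c • ![5, 0, 4] ∨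
          v = c • ![15, 10, 12]))) ∧
    Module.finrank ℝ (vectorSpan ℝ (face f ![15, 10, 12])) ≠ 2 ∧
    Module.finrank ℝ (vectorSpan ℝ (face g ![15, 10, 12])) ≠ 2 := by
  have hface' : ∀ h v, face h v = minFace (ℓ v) (NewtonPolyhedron h) := hface
  subst hf hg
  refine ⟨extremePoints_newtonPolyhedron_fg, fun v hv hv0 => ?_, ?_, ?_⟩
  · rw [hface', finrank_vectorSpan_minFace_newtonPolyhedron_eq_two_iff _ hv0, exponents_fg]
    refine ⟨fun hnc => ?_, not_collinear_fg_of_normal⟩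
    obtain ⟨a, b, c, rfl⟩ : ∃ a b c : ℝ, v = ![a, b, c] :=
      ⟨v 0, v 1, v 2, by ext i; fin_cases i <;> rfl⟩
    exact normal_of_not_collinear_fg (hv 0) (hv 1) (hv 2) hv0 hnc
  · rw [hface']
    exact finrank_vectorSpan_minFace_newtonPolyhedron_ne_two
      (collinear_exponents_X_pow_sub_X_pow 0 1 2 3) (by simp [Fin.forall_fin_succ])
  · rw [hface']
    exact finrank_vectorSpan_minFace_newtonPolyhedron_ne_two
      (collinear_exponents_X_pow_sub_X_pow 0 2 4 5) (by simp [Fin.forall_fin_succ])
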